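/- arXiv:2501.08895 — 5 statements merged into one kernel-verified Lean document; each statement's English description precedes it below -/
import Mathlib

section
/- Let T be a finite rooted tree and M a subset of its vertices. Let M' be the least common ancestor closure of M, i.e., the set of all least common ancestors of pairs (possibly equal) of vertices of M. Then |M'| ≤ 2|M|, and every connected component C of T − M' has at most 2 neighbours in M' (i.e., |N_T(C)| ≤ 2). -/
/-!
The ancestors of a vertex are the vertices of its root path, so they form a chain; a finite
nonempty chain has a deepest element (compare distances to the root), which gives LCAs.

Adding a vertex `a` to `M` adds at most two vertices to the closure: `a`, and the deepest LCA `w`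
of `a` with a vertex `u ∈ M`. Indeed, any other LCA `x` of `a` with some `v ∈ M` lies strictly
above `w`, and then it is `v` itself or the LCA of `v` and `u`. Induction gives `|M'| ≤ 2|M|`.

Two neighbours of a component `C` of `T - M'` are joined by a walk through `C`. Their LCA lies
on every such walk and belongs to `M'`, so it is one of the two: neighbours are comparable. A
neighbour strictly between two others would likewise lie on that walk, so the neighbours form a
chain with no middle element, hence at most two of them.
-/

open SimpleGraph

variable {V : Type*}

/-- In a tree `T` rooted at `root`, vertex `u` is an ancestor of `v` if `u` lies on
the (unique) path from `root` to `v`. -/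
def IsAncestor (T : SimpleGraph V) (root u v : V) : Prop :=
  ∀ p : T.Path root v, u ∈ p.1.support

/-- `w` is a least common ancestor of `u` and `v` in the tree `T` rooted at `root`:
`w` is a common ancestor of `u` and `v`, and every common ancestor of `u` and `v`
is an ancestor of `w`. -/
def IsLCA (T : SimpleGraph V) (root w u v : V) : Prop :=
  IsAncestor T root w u ∧ IsAncestor T root w v ∧
    ∀ z : V, IsAncestor T root z u → IsAncestor T root z v → IsAncestor T root z w

/-- The least common ancestor closure of a set `M`. -/
def lcaClosure (T : SimpleGraph V) (root : V) (M : Set V) : Set V :=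
  {w | ∃ u ∈ M, ∃ v ∈ M, IsLCA T root w u v}

namespace SimpleGraph

variable {G : SimpleGraph V} {a b u v w : V}

theorem Walk.mem_support_takeUntil_or_mem_support_takeUntil [DecidableEq V] (p : G.Walk a b)
    (hu : u ∈ p.support) (hw : w ∈ p.support) :
    u ∈ (p.takeUntil w hw).support ∨ w ∈ (p.takeUntil u hu).support :=
  (List.prefix_or_prefix_of_prefix (p.support_takeUntil_prefix_support hu)
    (p.support_takeUntil_prefix_support hw)).imp
    (fun h => h.subset (end_mem_support _)) (fun h => h.subset (end_mem_support _))

theorem Walk.IsPath.disjoint_support_takeUntil_dropUntil [DecidableEq V] {p : G.Walk a b}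
    (hp : p.IsPath) (hw : w ∈ p.support) :
    (p.takeUntil w hw).support.Disjoint (p.dropUntil w hw).support.tail := by
  have := hp.support_nodup
  rw [← p.take_spec hw, support_append] at this
  exact List.disjoint_of_nodup_append this

theorem IsAcyclic.support_subset_support_of_isPath (hG : G.IsAcyclic) {p : G.Walk u v}
    (hp : p.IsPath) (W : G.Walk u v) : p.support ⊆ W.support := by
  classical
  have : W.bypass = p :=
    congrArg Subtype.val ((hG.subsingleton_path u v).elim ⟨_, W.bypass_isPath⟩ ⟨p, hp⟩)
  exact this ▸ W.support_bypass_subset_support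

theorem IsAcyclic.length_eq_dist (hG : G.IsAcyclic) {p : G.Walk u v} (hp : p.IsPath) :
    p.length = G.dist u v := by
  obtain ⟨q, hq, hlen⟩ := p.reachable.exists_path_of_dist
  obtain rfl : p = q :=
    congrArg Subtype.val ((hG.subsingleton_path u v).elim ⟨p, hp⟩ ⟨q, hq⟩)
  exact hlen

end SimpleGraph

section Ancestors

variable {T : SimpleGraph V} {root u v w x z : V}

theorem SimpleGraph.IsAcyclic.isAncestor_iff (hT : T.IsAcyclic) {p : T.Walk root v}
    (hp : p.IsPath) : IsAncestor T root u v ↔ u ∈ p.support :=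
  ⟨fun h => h ⟨p, hp⟩, fun h q => (hT.subsingleton_path root v).elim ⟨p, hp⟩ q ▸ h⟩

theorem IsAncestor.refl (v : V) : IsAncestor T root v v := fun p => p.1.end_mem_support

theorem IsAncestor.root_left (v : V) : IsAncestor T root root v := fun p => p.1.start_mem_support

theorem IsAncestor.trans (h₁ : IsAncestor T root z u) (h₂ : IsAncestor T root u v) :
    IsAncestor T root z v := by
  classical
  intro p
  exact p.1.support_takeUntil_subset_support (h₂ p) (h₁ ⟨_, p.2.takeUntil (h₂ p)⟩)

theorem IsAncestor.antisymm (hT : T.IsTree) (h₁ : IsAncestor T root u w)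
    (h₂ : IsAncestor T root w u) : u = w := by
  classical
  obtain ⟨p, hp, -⟩ := hT.existsUnique_path root u
  by_contra hne
  exact Walk.endpoint_notMem_support_takeUntil hp (h₂ ⟨p, hp⟩) hne (h₁ ⟨_, hp.takeUntil _⟩)

theorem IsAncestor.total (hT : T.IsTree) (hu : IsAncestor T root u x)
    (hw : IsAncestor T root w x) : IsAncestor T root u w ∨ IsAncestor T root w u := by
  classical
  obtain ⟨p, hp, -⟩ := hT.existsUnique_path root x
  rw [hT.isAcyclic.isAncestor_iff (hp.takeUntil (hw ⟨p, hp⟩)),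
    hT.isAcyclic.isAncestor_iff (hp.takeUntil (hu ⟨p, hp⟩))]
  exact p.mem_support_takeUntil_or_mem_support_takeUntil _ _

theorem IsAncestor.dist_lt (hT : T.IsTree) (h : IsAncestor T root u w) (hne : u ≠ w) :
    T.dist root u < T.dist root w := by
  classical
  obtain ⟨p, hp, -⟩ := hT.existsUnique_path root w
  rw [← hT.isAcyclic.length_eq_dist hp, ← hT.isAcyclic.length_eq_dist (hp.takeUntil (h ⟨p, hp⟩))]
  exact Walk.length_takeUntil_lt_length _ hne

theorem IsAncestor.mem_support_of_not_isAncestor (hT : T.IsTree) (hv : IsAncestor T root z v)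
    (hu : ¬IsAncestor T root z u) (W : T.Walk u v) : z ∈ W.support := by
  classical
  obtain ⟨p, hp, -⟩ := hT.existsUnique_path root u
  rw [hT.isAcyclic.isAncestor_iff hp] at hu
  have hz := (hT.isAcyclic.isAncestor_iff (p.append W).bypass_isPath).1 hv
  have hzpW := (p.append W).support_bypass_subset_support hz
  rw [Walk.mem_support_append_iff] at hzpW
  exact hzpW.resolve_left hu

theorem IsAncestor.mem_support_of_isAncestor (hT : T.IsTree) (h₁ : IsAncestor T root u w)
    (h₂ : IsAncestor T root w v) (hne : w ≠ u) (W : T.Walk u v) : w ∈ W.support :=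
  h₂.mem_support_of_not_isAncestor hT (fun h => hne (h.antisymm hT h₁)) W

theorem finite_setOf_isAncestor (hT : T.IsTree) (v : V) :
    {u | IsAncestor T root u v}.Finite := by
  obtain ⟨p, hp, -⟩ := hT.existsUnique_path root v
  exact p.support.finite_toSet.subset fun u hu => hu ⟨p, hp⟩

theorem exists_forall_isAncestor_of_forall_isAncestor (hT : T.IsTree) {S : Set V}
    (hS : S.Nonempty) (hanc : ∀ u ∈ S, IsAncestor T root u v) :
    ∃ w ∈ S, ∀ u ∈ S, IsAncestor T root u w := by
  obtain ⟨w, hw, hmax⟩ := Set.exists_max_image S (T.dist root)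
    ((finite_setOf_isAncestor hT v).subset hanc) hS
  refine ⟨w, hw, fun u hu => ?_⟩
  rcases (hanc u hu).total hT (hanc w hw) with h | h
  · exact h
  · by_cases huw : w = u
    · exact huw ▸ .refl w
    · exact absurd (hmax u hu) (h.dist_lt hT huw).not_ge

end Ancestors

section LCA

variable {T : SimpleGraph V} {root a c u v w L : V}

theorem exists_isLCA (hT : T.IsTree) (u v : V) : ∃ w, IsLCA T root w u v := by
  obtain ⟨w, ⟨hwu, hwv⟩, hmax⟩ := exists_forall_isAncestor_of_forall_isAncestor hT
    (S := {z | IsAncestor T root z u ∧ IsAncestor T root z v}) ⟨root, .root_left u, .root_left v⟩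
    fun _ hz => hz.1
  exact ⟨w, hwu, hwv, fun z hzu hzv => hmax z ⟨hzu, hzv⟩⟩

theorem IsLCA.unique (hT : T.IsTree) {w' : V} (h : IsLCA T root w u v)
    (h' : IsLCA T root w' u v) : w = w' :=
  (h'.2.2 w h.1 h.2.1).antisymm hT (h.2.2 w' h'.1 h'.2.1)

theorem IsLCA.symm (h : IsLCA T root w u v) : IsLCA T root w v u :=
  ⟨h.2.1, h.1, fun z hzv hzu => h.2.2 z hzu hzv⟩

theorem isLCA_of_isAncestor (h : IsAncestor T root u v) : IsLCA T root u u v :=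
  ⟨.refl u, h, fun _ hz _ => hz⟩

theorem IsLCA.eq_left_of_isAncestor (hT : T.IsTree) (hL : IsLCA T root L u v)
    (h : IsAncestor T root u v) : L = u :=
  hL.unique hT (isLCA_of_isAncestor h)

theorem IsLCA.of_isAncestor_of_isAncestor (hT : T.IsTree) (hL : IsLCA T root L u v)
    (hua : IsAncestor T root u a) (hvc : IsAncestor T root v c)
    (huv : ¬IsAncestor T root u v) (hvu : ¬IsAncestor T root v u) : IsLCA T root L a c := by
  refine ⟨hL.1.trans hua, hL.2.1.trans hvc, fun z hza hzc => ?_⟩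
  rcases hza.total hT hua, hzc.total hT hvc with ⟨hzu | huz, hzv | hvz⟩
  · exact hL.2.2 z hzu hzv
  · exact absurd (hvz.trans hzu) hvu
  · exact absurd (huz.trans hzv) huv
  · exact ((huz.total hT hvz).elim huv hvu).elim

/-- The branches of the root paths below `L` meet only in `L`, so together they form the path
from `u` to `v`. -/
theorem IsLCA.mem_support (hT : T.IsTree) (hL : IsLCA T root L u v) (W : T.Walk u v) :
    L ∈ W.support := by
  classical
  obtain ⟨p, hp, -⟩ := hT.existsUnique_path root u
  obtain ⟨q, hq, -⟩ := hT.existsUnique_path root v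
  have hLp := hL.1 ⟨p, hp⟩
  have hLq := hL.2.1 ⟨q, hq⟩
  set d₁ := p.dropUntil L hLp
  set d₂ := q.dropUntil L hLq
  have hdisj : d₁.support.reverse.Disjoint d₂.support.tail := by
    intro z hz₁ hz₂
    have hzu := (hT.isAcyclic.isAncestor_iff hp).2
      (p.support_dropUntil_subset_support hLp (List.mem_reverse.1 hz₁))
    have hzv := (hT.isAcyclic.isAncestor_iff hq).2
      (q.support_dropUntil_subset_support hLq (List.mem_of_mem_tail hz₂))
    have hzL := (hT.isAcyclic.isAncestor_iff (hq.takeUntil hLq)).1 (hL.2.2 z hzu hzv)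
    exact hq.disjoint_support_takeUntil_dropUntil hLq hzL hz₂
  have hpath : (d₁.reverse.append d₂).IsPath := by
    rw [Walk.isPath_def, Walk.support_append, Walk.support_reverse]
    exact List.Nodup.append (List.nodup_reverse.2 (hp.dropUntil hLp).support_nodup)
      (hq.dropUntil hLq).support_nodup.tail hdisj
  exact hT.isAcyclic.support_subset_support_of_isPath hpath W
    ((Walk.mem_support_append_iff _ _).2 (.inl (Walk.end_mem_support _)))

end LCA

def IsLCAClosed (T : SimpleGraph V) (root : V) (K : Set V) : Prop :=
  ∀ u ∈ K, ∀ v ∈ K, ∀ w, IsLCA T root w u v → w ∈ K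

section Closure

variable {T : SimpleGraph V} {root : V}

theorem subset_lcaClosure (M : Set V) : M ⊆ lcaClosure T root M :=
  fun m hm => ⟨m, hm, m, hm, isLCA_of_isAncestor (.refl m)⟩

theorem isLCAClosed_lcaClosure (hT : T.IsTree) (M : Set V) :
    IsLCAClosed T root (lcaClosure T root M) := by
  rintro u ⟨a, ha, b, hb, hu⟩ v ⟨c, hc, d, hd, hv⟩ L hL
  by_cases huv : IsAncestor T root u v
  · exact hL.eq_left_of_isAncestor hT huv ▸ ⟨a, ha, b, hb, hu⟩
  by_cases hvu : IsAncestor T root v u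
  · exact hL.symm.eq_left_of_isAncestor hT hvu ▸ ⟨c, hc, d, hd, hv⟩
  exact ⟨a, ha, c, hc, hL.of_isAncestor_of_isAncestor hT hu.1 hv.1 huv hvu⟩

theorem Set.Finite.lcaClosure {M : Set V} (hT : T.IsTree) (hM : M.Finite) :
    (lcaClosure T root M).Finite :=
  (hM.biUnion fun v _ => finite_setOf_isAncestor hT v).subset
    fun _ ⟨_, hu, _, _, hw⟩ => Set.mem_biUnion hu hw.1

theorem IsLCA.eq_or_isLCA_of_isAncestor (hT : T.IsTree) {a u v w x : V}
    (hw : IsLCA T root w a u) (hx : IsLCA T root x a v) (hxw : IsAncestor T root x w)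
    (hne : x ≠ w) : x = v ∨ IsLCA T root x v u := by
  by_cases hvw : IsAncestor T root v w
  · exact .inl (hx.symm.eq_left_of_isAncestor hT (hvw.trans hw.1))
  have hwv : ¬IsAncestor T root w v := fun h => hne (hxw.antisymm hT (hx.2.2 w hw.1 h))
  refine .inr (IsLCA.of_isAncestor_of_isAncestor hT ?_ (.refl v) hw.2.1 hvw hwv)
  exact ⟨hx.2.1, hxw, fun z hzv hzw => hx.2.2 z (hzw.trans hw.1) hzv⟩

theorem lcaClosure_insert_subset (hT : T.IsTree) (a : V) (s : Set V) :
    ∃ w, lcaClosure T root (insert a s) ⊆ insert a (insert w (lcaClosure T root s)) := by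
  have haa {x : V} (hx : IsLCA T root x a a) : x = a := hx.eq_left_of_isAncestor hT (.refl a)
  rcases s.eq_empty_or_nonempty with rfl | ⟨u₀, hu₀⟩
  · refine ⟨a, fun x ⟨p, hp, q, hq, hx⟩ => .inl ?_⟩
    simp only [Set.mem_insert_iff, Set.mem_empty_iff_false, or_false] at hp hq
    subst hp hq
    exact haa hx
  obtain ⟨w, ⟨u, hu, hw⟩, hdeepest⟩ := exists_forall_isAncestor_of_forall_isAncestor hT
    (S := {x | ∃ v ∈ s, IsLCA T root x a v}) ((exists_isLCA hT a u₀).imp fun _ h => ⟨u₀, hu₀, h⟩)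
    fun _ ⟨_, _, hx⟩ => hx.1
  have hmixed {x v : V} (hv : v ∈ s) (hx : IsLCA T root x a v) :
      x ∈ insert a (insert w (lcaClosure T root s)) := by
    by_cases hxw : x = w
    · exact .inr (.inl hxw)
    rcases IsLCA.eq_or_isLCA_of_isAncestor hT hw hx (hdeepest x ⟨v, hv, hx⟩) hxw with rfl | hxvu
    · exact .inr (.inr (subset_lcaClosure s hv))
    · exact .inr (.inr ⟨v, hv, u, hu, hxvu⟩)
  refine ⟨w, fun x ⟨p, hp, q, hq, hx⟩ => ?_⟩
  rcases hp with rfl | hp <;> rcases hq with rfl | hq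
  · exact .inl (haa hx)
  · exact hmixed hq hx
  · exact hmixed hp hx.symm
  · exact .inr (.inr ⟨p, hp, q, hq, hx⟩)

theorem ncard_lcaClosure_le (hT : T.IsTree) (M : Set V) :
    (lcaClosure T root M).ncard ≤ 2 * M.ncard := by
  rcases M.finite_or_infinite with hM | hM
  · induction M, hM using Set.Finite.induction_on with
    | empty => simp [lcaClosure]
    | @insert a s ha hs ih =>
      obtain ⟨w, hw⟩ := lcaClosure_insert_subset (root := root) hT a s
      calc (lcaClosure T root (insert a s)).ncard
          ≤ (insert a (insert w (lcaClosure T root s))).ncard :=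
            Set.ncard_le_ncard hw (((hs.lcaClosure hT).insert w).insert a)
        _ ≤ (lcaClosure T root s).ncard + 2 := by
            grw [Set.ncard_insert_le, Set.ncard_insert_le]
        _ ≤ 2 * (insert a s).ncard := by
            rw [Set.ncard_insert_of_notMem ha hs]
            omega
  · simp [(hM.mono (subset_lcaClosure M)).ncard, hM.ncard]

end Closure

theorem IsChain.ncard_le_two {α : Type*} {r : α → α → Prop} {s : Set α} (hs : IsChain r s)
    (hmid : ∀ x ∈ s, ∀ y ∈ s, ∀ z ∈ s, r x y → r y z → y = x ∨ y = z) : s.ncard ≤ 2 := by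
  rcases s.finite_or_infinite with hfin | hinf
  · by_contra! h
    obtain ⟨a, b, c, ha, hb, hc, hab, hac, hbc⟩ := (Set.two_lt_ncard_iff hfin).1 h
    rcases hs ha hb hab with h₁ | h₁ <;> rcases hs hb hc hbc with h₂ | h₂ <;>
      rcases hs ha hc hac with h₃ | h₃ <;> grind
  · exact hinf.ncard ▸ zero_le_two

section Components

variable {T : SimpleGraph V} {root u v : V} {K : Set V}

theorem SimpleGraph.exists_walk_of_adj_of_connectedComponentMk_eq {s : Set V} {x y : s}
    (hxy : (T.induce s).connectedComponentMk x = (T.induce s).connectedComponentMk y)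
    (hu : T.Adj u x) (hv : T.Adj v y) :
    ∃ W : T.Walk u v, ∀ z ∈ W.support, z = u ∨ z = v ∨ z ∈ s := by
  obtain ⟨p⟩ := ConnectedComponent.exact hxy
  let f := (Embedding.induce (G := T) s).toHom
  have hu' : T.Adj u (f x) := hu
  have hv' : T.Adj (f y) v := hv.symm
  refine ⟨.cons hu' ((p.map f).concat hv'), fun z hz => ?_⟩
  rw [Walk.support_cons, Walk.support_concat, Walk.support_map, List.mem_cons, List.mem_append,
    List.mem_map, List.mem_singleton] at hz
  rcases hz with rfl | ⟨z', -, rfl⟩ | rfl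
  · exact .inl rfl
  · exact .inr (.inr z'.2)
  · exact .inr (.inl rfl)

theorem IsLCAClosed.isAncestor_or_isAncestor (hT : T.IsTree) (hK : IsLCAClosed T root K)
    (hu : u ∈ K) (hv : v ∈ K) (W : T.Walk u v) (hW : ∀ z ∈ W.support, z = u ∨ z = v ∨ z ∉ K) :
    IsAncestor T root u v ∨ IsAncestor T root v u := by
  obtain ⟨L, hL⟩ := exists_isLCA (root := root) hT u v
  rcases hW L (hL.mem_support hT W) with rfl | rfl | hLK
  · exact .inl hL.2.1
  · exact .inr hL.1
  · exact absurd (hK u hu v hv L hL) hLK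

/-- The neighbourhood `N_T(C)` in `K` of a component `C` of `T - K`. -/
def componentNeighbors (T : SimpleGraph V) (K : Set V)
    (C : (T.induce (Kᶜ : Set V)).ConnectedComponent) : Set V :=
  {m ∈ K | ∃ x : (Kᶜ : Set V), (T.induce (Kᶜ : Set V)).connectedComponentMk x = C ∧ T.Adj m x}

theorem exists_walk_of_mem_componentNeighbors {C : (T.induce (Kᶜ : Set V)).ConnectedComponent}
    (hu : u ∈ componentNeighbors T K C) (hv : v ∈ componentNeighbors T K C) :
    ∃ W : T.Walk u v, ∀ z ∈ W.support, z = u ∨ z = v ∨ z ∉ K := by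
  obtain ⟨-, x, hx, hux⟩ := hu
  obtain ⟨-, y, hy, hvy⟩ := hv
  exact exists_walk_of_adj_of_connectedComponentMk_eq (hx.trans hy.symm) hux hvy

theorem IsLCAClosed.ncard_componentNeighbors_le_two (hT : T.IsTree) (hK : IsLCAClosed T root K)
    (C : (T.induce (Kᶜ : Set V)).ConnectedComponent) : (componentNeighbors T K C).ncard ≤ 2 := by
  refine IsChain.ncard_le_two (r := IsAncestor T root) ?_ ?_
  · intro u hu v hv _
    obtain ⟨W, hW⟩ := exists_walk_of_mem_componentNeighbors hu hv
    exact hK.isAncestor_or_isAncestor hT hu.1 hv.1 W hW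
  · intro u hu w hw v hv huw hwv
    obtain ⟨W, hW⟩ := exists_walk_of_mem_componentNeighbors hu hv
    by_contra! hne
    rcases hW w (huw.mem_support_of_isAncestor hT hwv hne.1 W) with h | h | h
    exacts [hne.1 h, hne.2 h, h hw.1]

end Components

theorem lcaClosure_card_and_components_general (T : SimpleGraph V) (hT : T.IsTree)
    (root : V) (M : Set V) :
    (lcaClosure T root M).ncard ≤ 2 * M.ncard ∧
    ∀ C : (T.induce ((lcaClosure T root M)ᶜ : Set V)).ConnectedComponent,
      {m ∈ lcaClosure T root M |
        ∃ x : ((lcaClosure T root M)ᶜ : Set V),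
          (T.induce ((lcaClosure T root M)ᶜ : Set V)).connectedComponentMk x = C ∧
          T.Adj m x}.ncard ≤ 2 :=
  ⟨ncard_lcaClosure_le hT M, (isLCAClosed_lcaClosure hT M).ncard_componentNeighbors_le_two hT⟩

/-- if `T` is a finite rooted tree, `M` a set of vertices and `M'` its
LCA-closure, then `|M'| ≤ 2|M|` and every connected component `C` of `T - M'` has at
most two neighbours in `M'`. -/
theorem lcaClosure_card_and_components [Fintype V] (T : SimpleGraph V) (hT : T.IsTree)
    (root : V) (M : Set V) :
    (lcaClosure T root M).ncard ≤ 2 * M.ncard ∧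
    ∀ C : (T.induce ((lcaClosure T root M)ᶜ : Set V)).ConnectedComponent,
      {m ∈ lcaClosure T root M |
        ∃ x : ((lcaClosure T root M)ᶜ : Set V),
          (T.induce ((lcaClosure T root M)ᶜ : Set V)).connectedComponentMk x = C ∧
          T.Adj m x}.ncard ≤ 2 :=
  lcaClosure_card_and_components_general T hT root M
end

section
/- Let r, p be nonnegative integers, G a finite graph, A a subset of V(G), and S an (r,p)-guarding set for A. Suppose f : ℕ × ℕ → ℕ is non-decreasing in the second argument and for every subset A' of V(G) the number of distinct r-profiles with respect to A' (excluding the all-∞ profile) is at most f(r,|A'|). Then the number of distinct r-profiles with respect to A (excluding the all-∞ profile) is at most f(r,p)·|S|. -/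
open SimpleGraph

noncomputable def rProfile {V : Type*} (G : SimpleGraph V) (r : ℕ) (A : Set V) (v : V) :
    A → ℕ∞ :=
  fun a => if G.edist v a ≤ r then G.edist v a else ⊤

/-- The number of distinct `r`-profiles with respect to `A`, excluding the all-`∞` profile. -/
noncomputable def profCount {V : Type*} (G : SimpleGraph V) (r : ℕ) (A : Set V) : ℕ :=
  ({p | ∃ v : V, p = rProfile G r A v} \ {fun _ => ⊤}).ncard

/-- A family `𝒮` of subsets of `V(G)` is an `(r,p)`-guarding set for `A` if every member
has size at most `p` and for every vertex `v` there is a member of `𝒮` meeting every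
path of length at most `r` from `v` to a vertex of `A`. -/
def IsGuarding {V : Type*} (G : SimpleGraph V) (r p : ℕ) (A : Set V)
    (𝒮 : Set (Set V)) : Prop :=
  (∀ S ∈ 𝒮, S.ncard ≤ p) ∧
  ∀ v : V, ∃ S ∈ 𝒮, ∀ a ∈ A, ∀ w : G.Walk v a, w.IsPath → w.length ≤ r →
    ∃ x ∈ S, x ∈ w.support

/-! A guard `S` meeting every short path from `v` to `A` contains a vertex on a shortest `v`–`a`
path for each `a ∈ A` within distance `r`, so the `r`-profile of `v` with respect to `A` is
computed from its `r`-profile with respect to `S` as a truncated min-plus product with the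
distances from `S` to `A`. Hence every nontrivial `A`-profile is the image of a nontrivial
`S`-profile for some guard `S ∈ 𝒮`, and summing `pc_r(G, S) ≤ f(r, |S|) ≤ f(r, p)` over
`𝒮` gives the bound. -/

namespace SimpleGraph

variable {V : Type*} (G : SimpleGraph V) (r : ℕ)

def Guards (A S : Set V) (v : V) : Prop :=
  ∀ a ∈ A, ∀ w : G.Walk v a, w.IsPath → w.length ≤ r → ∃ x ∈ S, x ∈ w.support

def profiles (A : Set V) : Set (A → ℕ∞) :=
  Set.range (rProfile G r A) \ {fun _ => ⊤}

def cutoff (d : ℕ∞) : ℕ∞ :=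
  if d ≤ r then d else ⊤

noncomputable def rProfileVia (A S : Set V) (q : S → ℕ∞) : A → ℕ∞ :=
  fun a => cutoff r (⨅ x : S, q x + G.edist x a)

variable {G r}

lemma profCount_eq_ncard_profiles (A : Set V) : profCount G r A = (profiles G r A).ncard := by
  simp only [profCount, profiles, Set.range, eq_comm]

lemma finite_profiles [Finite V] (A : Set V) : (profiles G r A).Finite :=
  (Set.finite_range _).sdiff

lemma le_cutoff (d : ℕ∞) : d ≤ cutoff r d := by
  unfold cutoff
  split_ifs <;> simp

lemma cutoff_congr_of_le {d e : ℕ∞} (hde : d ≤ e) (hed : d ≤ r → e ≤ d) :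
    cutoff r e = cutoff r d := by
  by_cases h : d ≤ r
  · rw [le_antisymm (hed h) hde]
  · have he : ¬ e ≤ r := fun he => h (hde.trans he)
    simp only [cutoff, h, he, if_false]

lemma rProfileVia_top (A S : Set V) : rProfileVia G r A S (fun _ => ⊤) = fun _ => ⊤ := by
  funext a
  simp [rProfileVia, cutoff]

lemma Walk.edist_add_edist_le_length {u v x : V} (p : G.Walk u v) (hx : x ∈ p.support) :
    G.edist u x + G.edist x v ≤ p.length := by
  classical
  calc G.edist u x + G.edist x v
      ≤ (p.takeUntil x hx).length + (p.dropUntil x hx).length :=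
        add_le_add (edist_le _) (edist_le _)
    _ = p.length := by
        rw [← Nat.cast_add, ← Walk.length_append, Walk.take_spec]

lemma Guards.exists_edist_add_edist_eq {A S : Set V} {v a : V} (hS : G.Guards r A S v)
    (ha : a ∈ A) (hr : G.edist v a ≤ r) :
    ∃ x ∈ S, G.edist v x + G.edist x a = G.edist v a := by
  classical
  obtain ⟨w, hw⟩ := exists_walk_of_edist_ne_top (ne_top_of_le_ne_top (by simp) hr)
  have hp : (w.bypass.length : ℕ∞) ≤ w.length := by
    exact_mod_cast w.length_bypass_le_length
  obtain ⟨x, hxS, hx⟩ :=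
    hS a ha w.bypass w.bypass_isPath (by exact_mod_cast (hp.trans_eq hw).trans hr)
  refine ⟨x, hxS, le_antisymm ?_ G.edist_triangle⟩
  calc G.edist v x + G.edist x a ≤ w.bypass.length := w.bypass.edist_add_edist_le_length hx
    _ ≤ w.length := hp
    _ = G.edist v a := hw

lemma Guards.rProfile_eq_rProfileVia {A S : Set V} {v : V} (hS : G.Guards r A S v) :
    rProfile G r A v = rProfileVia G r A S (rProfile G r S v) := by
  funext a
  refine (cutoff_congr_of_le ?_ fun hr => ?_).symm
  · exact le_iInf fun x => G.edist_triangle.trans (add_le_add_left (le_cutoff _) _)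
  · obtain ⟨x, hxS, hx⟩ := hS.exists_edist_add_edist_eq a.2 hr
    have hvx : G.edist v x ≤ r := le_self_add.trans (hx.trans_le hr)
    refine (iInf_le _ ⟨x, hxS⟩).trans_eq ?_
    simp only [rProfile, hvx, if_true, hx]

lemma profiles_subset_biUnion {A : Set V} (𝒯 : Set (Set V))
    (h𝒯 : ∀ v, ∃ S ∈ 𝒯, G.Guards r A S v) :
    profiles G r A ⊆ ⋃ S ∈ 𝒯, rProfileVia G r A S '' profiles G r S := by
  rintro _ ⟨⟨v, rfl⟩, hv⟩
  obtain ⟨S, hS𝒯, hS⟩ := h𝒯 v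
  refine Set.mem_biUnion hS𝒯 ⟨rProfile G r S v, ⟨⟨v, rfl⟩, fun htop => hv ?_⟩, ?_⟩
  · rw [hS.rProfile_eq_rProfileVia, Set.mem_singleton_iff.1 htop, rProfileVia_top]
    rfl
  · exact hS.rProfile_eq_rProfileVia.symm

lemma profCount_le_sum_profCount [Finite V] {A : Set V} (𝒯 : Finset (Set V))
    (h𝒯 : ∀ v, ∃ S ∈ 𝒯, G.Guards r A S v) :
    profCount G r A ≤ ∑ S ∈ 𝒯, profCount G r S := by
  calc profCount G r A = (profiles G r A).ncard := profCount_eq_ncard_profiles A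
    _ ≤ (⋃ S ∈ (𝒯 : Set (Set V)), rProfileVia G r A S '' profiles G r S).ncard :=
        Set.ncard_le_ncard (profiles_subset_biUnion _ (by simpa using h𝒯))
          (𝒯.finite_toSet.biUnion fun S _ => (finite_profiles S).image _)
    _ ≤ ∑ S ∈ 𝒯, (rProfileVia G r A S '' profiles G r S).ncard := by
        simpa using 𝒯.set_ncard_biUnion_le _
    _ ≤ ∑ S ∈ 𝒯, profCount G r S := Finset.sum_le_sum fun S _ =>
        (Set.ncard_image_le (finite_profiles S)).trans_eq (profCount_eq_ncard_profiles S).symm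

end SimpleGraph

/-- Joret–Rambaud, Lemma 12: if `𝒮` is an `(r,p)`-guarding set for `A` and
`pc_r(G,A') ≤ f(r,|A'|)` for all `A'`, with `f` non-decreasing in its second argument,
then `pc_r(G,A) ≤ f(r,p)·|𝒮|`. -/
theorem profCount_le_of_guarding {V : Type*} [Fintype V] (G : SimpleGraph V)
    (r p : ℕ) (A : Set V) (𝒮 : Set (Set V)) (hguard : IsGuarding G r p A 𝒮)
    (f : ℕ × ℕ → ℕ) (hf : ∀ s k k', k ≤ k' → f (s, k) ≤ f (s, k'))
    (hbound : ∀ A' : Set V, profCount G r A' ≤ f (r, A'.ncard)) :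
    profCount G r A ≤ f (r, p) * 𝒮.ncard := by
  have h𝒮 : 𝒮.Finite := Set.toFinite 𝒮
  calc profCount G r A ≤ ∑ S ∈ h𝒮.toFinset, profCount G r S :=
        profCount_le_sum_profCount _ fun v => by simpa [Guards] using hguard.2 v
    _ ≤ ∑ _S ∈ h𝒮.toFinset, f (r, p) := Finset.sum_le_sum fun S hS =>
        (hbound S).trans (hf r _ _ (hguard.1 S (h𝒮.mem_toFinset.1 hS)))
    _ = f (r, p) * 𝒮.ncard := by
        rw [Finset.sum_const, smul_eq_mul, mul_comm, Set.ncard_eq_toFinset_card 𝒮 h𝒮]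
end

section
/- Let G be a finite graph, r, ℓ natural numbers, A ⊆ V(G) \ X, X ⊆ V(G), and S, S' two (possibly equal) subsets of V(G) such that (1) every path from a vertex of X to a vertex of V(G) \ X intersects S ∪ S', and (2) any two vertices of S are at distance at most ℓ in G, and any two vertices of S' are at distance at most ℓ in G. Then the number of distinct r-profiles with respect to A of vertices of X is at most (r+2)^2 · (ℓ+1)^{|A|}. -/
open SimpleGraph

/-!
Write `d(x, T)` for the distance from `x` to a set `T`. For `x ∈ X` and `a ∈ A`, every shortest
`x`–`a` path passes through `S` or `S'`, while any two vertices of `S` (or of `S'`) are within `ℓ`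
of each other. Hence
`μ(x, a) := min (d(x, S) + d(a, S)) (d(x, S') + d(a, S'))` satisfies `μ ≤ d(x, a) ≤ μ + ℓ`.
Since only distances up to `r` are recorded, the profile of `x` is determined by `d(x, S)` and
`d(x, S')` capped at `r + 1` (`r + 2` values each) together with the offsets
`d(x, a) - μ(x, a) ∈ [0, ℓ]`, one for each `a ∈ A`.
-/

namespace ENat

def cutoff (r : ℕ) (n : ℕ∞) : ℕ∞ :=
  if n ≤ r then n else ⊤

variable {r : ℕ}

lemma cutoff_mono : Monotone (cutoff r) := by
  intro m n hmn
  unfold cutoff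
  split_ifs with hm hn hn'
  · exact hmn
  · exact le_top
  · exact absurd (hmn.trans hn') hm
  · exact le_rfl

lemma cutoff_min (m n : ℕ∞) : cutoff r (min m n) = min (cutoff r m) (cutoff r n) :=
  cutoff_mono.map_min

lemma cutoff_min_succ_add (n q : ℕ∞) : cutoff r (min n (r + 1) + q) = cutoff r (n + q) := by
  rcases le_or_gt n r with hn | hn
  · rw [min_eq_left (hn.trans le_self_add)]
  · have hr : (r : ℕ∞) < r + 1 := natCast_lt_succ
    have hn' : (r : ℕ∞) + 1 ≤ n := Order.add_one_le_of_lt hn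
    rw [min_eq_right hn', cutoff, cutoff, if_neg (hr.trans_le le_self_add).not_ge,
      if_neg (hn.trans_le le_self_add).not_ge]

lemma cutoff_min_add_min_add (u u' q q' δ : ℕ∞) :
    cutoff r (min (min u (r + 1) + q) (min u' (r + 1) + q') + δ) =
      cutoff r (min (u + q) (u' + q') + δ) := by
  rw [← min_add_add_right (min u (r + 1) + q), ← min_add_add_right (u + q), cutoff_min, cutoff_min,
    add_assoc, add_assoc, add_assoc, add_assoc, cutoff_min_succ_add, cutoff_min_succ_add]

lemma exists_fin_natCast_eq {n : ℕ∞} {k : ℕ} (h : n ≤ k) :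
    ∃ i : Fin (k + 1), ((i : ℕ) : ℕ∞) = n := by
  lift n to ℕ using ne_top_of_le_ne_top (natCast_ne_top k) h
  exact ⟨⟨n, Nat.lt_succ_of_le (Nat.cast_le.mp h)⟩, rfl⟩

end ENat

lemma Set.ncard_le_card_of_subset_range {β γ : Type*} [Finite γ] {s : Set β} {F : γ → β}
    (h : s ⊆ Set.range F) : s.ncard ≤ Nat.card γ :=
  (Set.ncard_le_ncard h (Set.finite_range F)).trans
    ((Nat.card_coe_set_eq _).symm.trans_le (Finite.card_range_le F))

lemma rProfile_apply {V : Type*} (G : SimpleGraph V) (r : ℕ) (A : Set V) (v : V) (a : A) :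
    rProfile G r A v a = ENat.cutoff r (G.edist v a) :=
  rfl

namespace SimpleGraph

variable {V : Type*} {G : SimpleGraph V} {x y s : V} {T : Set V}

noncomputable def infEdist (G : SimpleGraph V) (x : V) (T : Set V) : ℕ∞ :=
  ⨅ s : T, G.edist x s

lemma infEdist_add_infEdist_le (hs : s ∈ T) :
    G.infEdist x T + G.infEdist y T ≤ G.edist x s + G.edist s y := by
  rw [edist_comm (u := s)]
  exact add_le_add (iInf_le (fun t : T => G.edist x t) ⟨s, hs⟩)
    (iInf_le (fun t : T => G.edist y t) ⟨s, hs⟩)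

lemma Walk.edist_add_edist_le_length_s4 [DecidableEq V] (w : G.Walk x y) (hs : s ∈ w.support) :
    G.edist x s + G.edist s y ≤ w.length := by
  calc G.edist x s + G.edist s y
      ≤ (w.takeUntil s hs).length + (w.dropUntil s hs).length :=
        add_le_add (edist_le _) (edist_le _)
    _ = w.length := by rw [← Nat.cast_add, ← Walk.length_append, Walk.take_spec]

lemma exists_edist_add_edist_le_of_forall_isPath (hxy : G.Reachable x y)
    (hT : ∀ w : G.Walk x y, w.IsPath → ∃ s ∈ T, s ∈ w.support) :
    ∃ s ∈ T, G.edist x s + G.edist s y ≤ G.edist x y := by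
  classical
  obtain ⟨w, hw, hlen⟩ := hxy.exists_path_of_dist
  obtain ⟨s, hsT, hsw⟩ := hT w hw
  refine ⟨s, hsT, (w.edist_add_edist_le_length_s4 hsw).trans ?_⟩
  rw [hlen, hxy.coe_dist_eq_edist]

lemma min_infEdist_add_infEdist_le_edist {S S' : Set V}
    (hsep : ∀ w : G.Walk x y, w.IsPath → ∃ s ∈ S ∪ S', s ∈ w.support) :
    min (G.infEdist x S + G.infEdist y S) (G.infEdist x S' + G.infEdist y S') ≤ G.edist x y := by
  by_cases hxy : G.Reachable x y
  · obtain ⟨s, hs | hs, hle⟩ := exists_edist_add_edist_le_of_forall_isPath hxy hsep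
    · exact (min_le_left _ _).trans ((infEdist_add_infEdist_le hs).trans hle)
    · exact (min_le_right _ _).trans ((infEdist_add_infEdist_le hs).trans hle)
  · simp [edist_eq_top_of_not_reachable hxy]

lemma edist_le_infEdist_add_infEdist_add {ℓ : ℕ∞} (hT : ∀ u ∈ T, ∀ v ∈ T, G.edist u v ≤ ℓ) :
    G.edist x y ≤ G.infEdist x T + G.infEdist y T + ℓ := by
  rcases T.eq_empty_or_nonempty with rfl | hne
  · simp [infEdist, iInf_of_empty]
  · have := hne.to_subtype
    obtain ⟨s, hs⟩ := ENat.exists_eq_iInf fun s : T => G.edist x s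
    obtain ⟨s', hs'⟩ := ENat.exists_eq_iInf fun s : T => G.edist y s
    calc G.edist x y ≤ G.edist x s + (G.edist s s' + G.edist s' y) := by
          grw [G.edist_triangle (v := (s : V)), G.edist_triangle (u := (s : V)) (v := (s' : V))]
      _ ≤ G.edist x s + (ℓ + G.edist y s') := by
          rw [edist_comm (u := (s' : V))]
          grw [hT s s.2 s' s'.2]
      _ = G.infEdist x T + G.infEdist y T + ℓ := by
          rw [infEdist, infEdist, ← hs, ← hs']
          ring

end SimpleGraph

/-- if `S ∪ S'` meets every path from `X` to `V(G) \ X`, and `S` (resp. `S'`)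
has `G`-diameter at most `ℓ`, then the vertices of `X` have at most `(r+2)²·(ℓ+1)^|A|`
distinct `r`-profiles with respect to `A ⊆ V(G) \ X`. -/
theorem profiles_of_two_sets_separated {V : Type*} [Fintype V] (G : SimpleGraph V)
    (r ℓ : ℕ) (A X S S' : Set V) (hA : A ⊆ Xᶜ)
    (hsep : ∀ x ∈ X, ∀ y ∉ X, ∀ w : G.Walk x y, w.IsPath →
      ∃ s ∈ S ∪ S', s ∈ w.support)
    (hS : ∀ u ∈ S, ∀ v ∈ S, G.edist u v ≤ ℓ)
    (hS' : ∀ u ∈ S', ∀ v ∈ S', G.edist u v ≤ ℓ) :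
    (rProfile G r A '' X).ncard ≤ (r + 2) ^ 2 * (ℓ + 1) ^ A.ncard := by
  let F : Fin (r + 2) × Fin (r + 2) × (A → Fin (ℓ + 1)) → A → ℕ∞ := fun c a =>
    ENat.cutoff r
      (min ((c.1 : ℕ) + G.infEdist a S) ((c.2.1 : ℕ) + G.infEdist a S') + (c.2.2 a : ℕ))
  refine (Set.ncard_le_card_of_subset_range (F := F) ?_).trans_eq ?_
  · rintro _ ⟨x, hx, rfl⟩
    set μ : A → ℕ∞ := fun a =>
      min (G.infEdist x S + G.infEdist a S) (G.infEdist x S' + G.infEdist a S')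
    have hlow (a : A) : μ a ≤ G.edist x a :=
      min_infEdist_add_infEdist_le_edist (hsep x hx a (hA a.2))
    have hup (a : A) : G.edist x a ≤ μ a + ℓ := by
      rw [← min_add_add_right]
      exact le_min (edist_le_infEdist_add_infEdist_add hS) (edist_le_infEdist_add_infEdist_add hS')
    obtain ⟨i, hi⟩ := ENat.exists_fin_natCast_eq (min_le_right (G.infEdist x S) (r + 1 : ℕ))
    obtain ⟨i', hi'⟩ := ENat.exists_fin_natCast_eq (min_le_right (G.infEdist x S') (r + 1 : ℕ))
    choose δ hδ using fun a => ENat.exists_fin_natCast_eq (tsub_le_iff_left.mpr (hup a))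
    refine ⟨(i, i', δ), funext fun a => ?_⟩
    simp only [F, hi, hi', hδ, Nat.cast_add, Nat.cast_one, ENat.cutoff_min_add_min_add]
    rw [add_tsub_cancel_of_le (hlow a), rProfile_apply]
  · simp only [Nat.card_prod, Nat.card_fun, Nat.card_eq_fintype_card, Fintype.card_fin,
      ← Nat.card_coe_set_eq]
    ring
end

section
/- Let G be a finite graph and L a linear ordering of V(G). Let A ⊆ V(G), B = ⋃_{a∈A} WReach_r[G,L,a], and for a vertex x with some path of length at most r to A, let μ(x) = max_L(B ∩ WReach_r[G,L,x]). Then B ∩ WReach_r[G,L,x] is nonempty, and SReach_{2r}[G,L,μ(x)] intersects every path of length at most r from x to a vertex of A. -/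
open SimpleGraph

variable {V : Type*}

/-- Weak reachability with respect to the linear order on `V`. -/
def WReach [LinearOrder V] (G : SimpleGraph V) (r : ℕ) (v : V) : Set V :=
  {u | ∃ w : G.Walk u v, w.IsPath ∧ w.length ≤ r ∧ ∀ x ∈ w.support, u ≤ x}

/-- Strong reachability with respect to the linear order on `V`. -/
def SReach [LinearOrder V] (G : SimpleGraph V) (r : ℕ) (v : V) : Set V :=
  {u | ∃ w : G.Walk u v, w.IsPath ∧ w.length ≤ r ∧ ∀ x ∈ w.support, x ≠ u → v ≤ x}

/-- Auxiliary: the minimum vertex of a short path from `x` to `a ∈ A` lies in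
`B ∩ WReach_r[x]`. -/
lemma min_mem_aux [LinearOrder V] {G : SimpleGraph V} {r : ℕ} {A : Set V}
    {x a : V} (ha : a ∈ A) (w : G.Walk x a) (hp : w.IsPath) (hl : w.length ≤ r) :
    ∃ m ∈ (⋃ a ∈ A, WReach G r a) ∩ WReach G r x, m ∈ w.support ∧ ∀ y ∈ w.support, m ≤ y := by
  classical
  obtain ⟨m, hm, hmin⟩ := w.support.toFinset.exists_min_image id
    (by simp [List.toFinset_nonempty_iff])
  rw [List.mem_toFinset] at hm
  have hmin' : ∀ y ∈ w.support, m ≤ y := fun y hy => hmin y (List.mem_toFinset.2 hy)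
  refine ⟨m, ⟨?_, ?_⟩, hm, hmin'⟩
  · refine Set.mem_iUnion₂.2 ⟨a, ha, w.dropUntil m hm, hp.dropUntil hm,
      le_trans (w.length_dropUntil_le hm) hl, fun y hy =>
        hmin' y (w.support_dropUntil_subset hm hy)⟩
  · refine ⟨(w.takeUntil m hm).reverse, (hp.takeUntil hm).reverse, ?_, fun y hy => ?_⟩
    · rw [SimpleGraph.Walk.length_reverse]
      exact le_trans (w.length_takeUntil_le hm) hl
    · rw [SimpleGraph.Walk.support_reverse, List.mem_reverse] at hy
      exact hmin' y (w.support_takeUntil_subset hm hy)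

/-- Auxiliary: from a walk to `μ` containing a vertex below `μ`, extract a vertex `s < μ`
on the walk together with a tail walk from `s` to `μ` all of whose other vertices are
at least `μ`. -/
lemma exists_tail_aux [LinearOrder V] {G : SimpleGraph V} {μ : V} :
    ∀ {a : V} (Q : G.Walk a μ), (∃ y ∈ Q.support, y < μ) →
      ∃ s ∈ Q.support, s < μ ∧ ∃ T : G.Walk s μ, (∀ y ∈ T.support, y ∈ Q.support) ∧
        T.length ≤ Q.length ∧ ∀ y ∈ T.support, y ≠ s → μ ≤ y := by
  intro a Q
  induction Q with
  | nil =>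
    rintro ⟨y, hy, hlt⟩
    simp only [SimpleGraph.Walk.support_nil, List.mem_singleton] at hy
    subst hy; exact absurd hlt (lt_irrefl _)
  | @cons u v c h q ih =>
    rintro ⟨y, hy, hlt⟩
    by_cases hq : ∃ z ∈ q.support, z < c
    · obtain ⟨s, hs, hslt, T, hsub, hlen, hcond⟩ := ih hq
      exact ⟨s, List.mem_cons_of_mem _ hs, hslt, T,
        fun z hz => List.mem_cons_of_mem _ (hsub z hz),
        by simpa using Nat.le_succ_of_le hlen, hcond⟩
    · push_neg at hq
      rw [SimpleGraph.Walk.support_cons, List.mem_cons] at hy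
      have hya : y = _ := hy.resolve_right (fun h' => absurd hlt (not_lt.2 (hq y h')))
      subst hya
      refine ⟨y, by simp, hlt, SimpleGraph.Walk.cons h q, fun z hz => hz, le_rfl,
        fun z hz hzne => ?_⟩
      rw [SimpleGraph.Walk.support_cons, List.mem_cons] at hz
      exact hq z (hz.resolve_left hzne)

/-- with `B = ⋃_{a∈A} WReach_r[G,L,a]`, for any vertex `x` having a path of
length at most `r` to `A`, the set `B ∩ WReach_r[G,L,x]` is nonempty, and for its
`L`-maximum `μ`, the set `SReach_{2r}[G,L,μ]` meets every path of length at most `r` from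
`x` to `A`. -/
theorem sreach_guards [Fintype V] [LinearOrder V] (G : SimpleGraph V) (r : ℕ)
    (A : Set V) (x : V)
    (hx : ∃ a ∈ A, ∃ w : G.Walk x a, w.IsPath ∧ w.length ≤ r) :
    ((⋃ a ∈ A, WReach G r a) ∩ WReach G r x).Nonempty ∧
    ∀ μ : V, IsGreatest ((⋃ a ∈ A, WReach G r a) ∩ WReach G r x) μ →
      ∀ a ∈ A, ∀ w : G.Walk x a, w.IsPath → w.length ≤ r →
        ∃ s ∈ SReach G (2 * r) μ, s ∈ w.support := by
  classical
  obtain ⟨a₀, ha₀, w₀, hp₀, hl₀⟩ := hx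
  obtain ⟨m₀, hm₀, -, -⟩ := min_mem_aux ha₀ w₀ hp₀ hl₀
  refine ⟨⟨m₀, hm₀⟩, ?_⟩
  intro μ hμ a ha w hp hl
  obtain ⟨p, hpp, hplen, hpmin⟩ := hμ.1.2
  by_cases hall : ∀ y ∈ w.support, μ ≤ y
  · -- then the minimum of w's support equals μ
    obtain ⟨m, hm, hmw, hmin⟩ := min_mem_aux ha w hp hl
    have h1 : m ≤ μ := hμ.2 hm
    have h2 : m = μ := le_antisymm h1 (hall m hmw)
    subst h2
    exact ⟨m, ⟨SimpleGraph.Walk.nil, SimpleGraph.Walk.IsPath.nil, Nat.zero_le _,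
      by simp⟩, hmw⟩
  · push_neg at hall
    obtain ⟨y, hy, hylt⟩ := hall
    set Q : G.Walk a μ := w.reverse.append p.reverse with hQ
    have hyQ : ∃ z ∈ Q.support, z < μ := by
      refine ⟨y, ?_, hylt⟩
      rw [hQ, SimpleGraph.Walk.support_append]
      exact List.mem_append_left _ (by rwa [SimpleGraph.Walk.support_reverse, List.mem_reverse])
    obtain ⟨s, hs, hslt, T, hsub, hlen, hcond⟩ := exists_tail_aux Q hyQ
    have hsw : s ∈ w.support := by
      rw [hQ, SimpleGraph.Walk.support_append, List.mem_append] at hs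
      rcases hs with hs | hs
      · rwa [SimpleGraph.Walk.support_reverse, List.mem_reverse] at hs
      · exfalso
        have : s ∈ p.support := by
          have := List.mem_of_mem_tail hs
          rwa [SimpleGraph.Walk.support_reverse, List.mem_reverse] at this
        exact absurd (hpmin s this) (not_le.2 hslt)
    refine ⟨s, ⟨T.bypass, T.bypass_isPath, ?_, fun z hz hzne => hcond z (T.support_bypass_subset hz) hzne⟩, hsw⟩
    have : Q.length ≤ 2 * r := by
      rw [hQ, SimpleGraph.Walk.length_append, SimpleGraph.Walk.length_reverse,
        SimpleGraph.Walk.length_reverse]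
      omega
    exact le_trans (le_trans T.length_bypass_le hlen) this
end

section
/- Let C be a class of graphs closed under adding pendant vertices (attaching a new degree-one vertex to any vertex of a graph in C keeps it in C). Suppose there is a function f : ℕ² → ℕ such that nc_r(G,k) ≤ f(r,k) for every G ∈ C and all r,k. Then pc_r(G,k) ≤ f(r,(r+1)k) for every G ∈ C and all r,k. -/
open SimpleGraph

noncomputable def pc {V : Type*} (G : SimpleGraph V) (r k : ℕ) : ℕ :=
  sSup {n | ∃ A : Set V, A.ncard = k ∧ n = profCount G r A}

noncomputable def ncCount {V : Type*} (G : SimpleGraph V) (r : ℕ) (A : Set V) : ℕ :=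
  ({s : Set V | ∃ v : V, s = {u ∈ A | G.edist v u ≤ r}}).ncard

noncomputable def nc {V : Type*} (G : SimpleGraph V) (r k : ℕ) : ℕ :=
  sSup {n | ∃ A : Set V, A.ncard = k ∧ n = ncCount G r A}


/-- The graph obtained from `G` by attaching a new pendant vertex (the element `none`)
to the vertex `v`. -/
def addPendant {V : Type*} (G : SimpleGraph V) (v : V) : SimpleGraph (Option V) :=
  SimpleGraph.fromRel (fun a b =>
    (∃ x y, a = some x ∧ b = some y ∧ G.Adj x y) ∨ (a = none ∧ b = some v))

variable {V : Type*} {G : SimpleGraph V} {v : V}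

lemma addPendant_adj {a b : Option V} : (addPendant G v).Adj a b ↔
    (∃ x y, a = some x ∧ b = some y ∧ G.Adj x y) ∨ (a = none ∧ b = some v)
      ∨ (a = some v ∧ b = none) := by
  simp only [addPendant, fromRel_adj]
  constructor
  · rintro ⟨hne, (⟨x, y, rfl, rfl, h⟩ | ⟨rfl, rfl⟩) | (⟨x, y, rfl, rfl, h⟩ | ⟨rfl, rfl⟩)⟩
    · exact Or.inl ⟨x, y, rfl, rfl, h⟩
    · exact Or.inr (Or.inl ⟨rfl, rfl⟩)
    · exact Or.inl ⟨y, x, rfl, rfl, h.symm⟩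
    · exact Or.inr (Or.inr ⟨rfl, rfl⟩)
  · rintro (⟨x, y, rfl, rfl, h⟩ | ⟨rfl, rfl⟩ | ⟨rfl, rfl⟩)
    · exact ⟨by simpa using h.ne, Or.inl (Or.inl ⟨x, y, rfl, rfl, h⟩)⟩
    · exact ⟨by simp, Or.inl (Or.inr ⟨rfl, rfl⟩)⟩
    · exact ⟨by simp, Or.inr (Or.inr ⟨rfl, rfl⟩)⟩

lemma addPendant_adj_some {x y : V} (h : G.Adj x y) :
    (addPendant G v).Adj (some x) (some y) :=
  addPendant_adj.mpr (Or.inl ⟨x, y, rfl, rfl, h⟩)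

lemma exists_walk_le {a b : Option V} (p : (addPendant G v).Walk a b) :
    ∃ q : G.Walk (a.getD v) (b.getD v), q.length ≤ p.length := by
  induction p with
  | nil => exact ⟨.nil, le_rfl⟩
  | @cons a c b h p ih =>
    obtain ⟨q, hq⟩ := ih
    rcases addPendant_adj.mp h with ⟨x, y, rfl, rfl, hxy⟩ | ⟨rfl, rfl⟩ | ⟨rfl, rfl⟩
    · exact ⟨.cons (by simpa using hxy) q, by simpa using Nat.succ_le_succ hq⟩
    · exact ⟨q, by simpa using Nat.le_succ_of_le hq⟩
    · exact ⟨q, by simpa using Nat.le_succ_of_le hq⟩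

lemma addPendant_edist_some_some (x y : V) :
    (addPendant G v).edist (some x) (some y) = G.edist x y := by
  apply le_antisymm
  · rcases eq_or_ne (G.edist x y) ⊤ with h | h
    · simp [h]
    · obtain ⟨p, hp⟩ := exists_walk_of_edist_ne_top h
      rw [← hp]
      have := edist_le (G := addPendant G v) (p.map ⟨some, fun h => addPendant_adj_some (v := v) h⟩)
      simpa using this
  · rcases eq_or_ne ((addPendant G v).edist (some x) (some y)) ⊤ with h | h
    · simp [h]
    · obtain ⟨p, hp⟩ := exists_walk_of_edist_ne_top h
      obtain ⟨q, hq⟩ := exists_walk_le p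
      calc G.edist x y ≤ q.length := edist_le q
        _ ≤ p.length := by exact_mod_cast hq
        _ = _ := hp

lemma addPendant_edist_some_none (x : V) :
    (addPendant G v).edist (some x) none = G.edist x v + 1 := by
  apply le_antisymm
  · calc (addPendant G v).edist (some x) none
        ≤ (addPendant G v).edist (some x) (some v) + (addPendant G v).edist (some v) none :=
          SimpleGraph.edist_triangle
    _ ≤ G.edist x v + 1 := by
        rw [addPendant_edist_some_some]
        gcongr
        rw [edist_comm]
        exact le_of_eq <| edist_eq_one_iff_adj.mpr (addPendant_adj.mpr (Or.inr (Or.inl ⟨rfl, rfl⟩)))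
  · rcases eq_or_ne ((addPendant G v).edist (some x) none) ⊤ with h | h
    · simp [h]
    · obtain ⟨p, hp⟩ := exists_walk_of_edist_ne_top h
      rw [← hp]
      cases hpr : p.reverse with
      | @cons _ c _ hadj q =>
        have hc : c = some v := by
          rcases addPendant_adj.mp hadj with ⟨_, _, h', _⟩ | ⟨_, rfl⟩ | ⟨h', _⟩
          · exact absurd h' (by simp)
          · rfl
          · exact absurd h' (by simp)
        subst hc
        obtain ⟨qq, hqq⟩ := exists_walk_le q
        have hlen : q.length + 1 = p.length := by
          have := congrArg Walk.length hpr
          simpa [Nat.add_comm] using this.symm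
        have : G.edist x v ≤ (q.length : ℕ∞) := by
          calc G.edist x v = G.edist v x := edist_comm
            _ ≤ qq.length := edist_le qq
            _ ≤ q.length := by exact_mod_cast hqq
        calc G.edist x v + 1 ≤ (q.length : ℕ∞) + 1 := by gcongr
          _ = ((q.length + 1 : ℕ) : ℕ∞) := by push_cast; ring
          _ = (p.length : ℕ∞) := by rw [hlen]

lemma chain_exists
    (C : ∀ (V : Type) [Fintype V], SimpleGraph V → Prop)
    (hclosed : ∀ (V : Type) [Fintype V] (G : SimpleGraph V),
      C V G → ∀ v : V, C (Option V) (addPendant G v)) :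
    ∀ (n : ℕ) (W : Type) (instW : Fintype W) (H : SimpleGraph W) (_ : C W H) (w : W),
    ∃ (W' : Type) (instW' : Fintype W') (H' : SimpleGraph W') (ι : W → W') (q : ℕ → W'),
      C W' H' ∧ Function.Injective ι ∧ (∀ x y, H'.edist (ι x) (ι y) = H.edist x y) ∧
      (∀ j, j ≤ n → ∀ x, H'.edist (ι x) (q j) = H.edist x w + j) ∧
      (∀ j, j ≤ n → ∀ j', j' ≤ n → q j = q j' → j = j') ∧
      (∀ j, 1 ≤ j → j ≤ n → ∀ x, q j ≠ ι x) := by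
  intro n
  induction n with
  | zero =>
    intro W instW H hH w
    exact ⟨W, instW, H, id, fun _ => w, hH, fun _ _ h => h, fun _ _ => rfl,
      fun j hj x => by interval_cases j; simp,
      fun j hj j' hj' _ => by omega, fun j hj hj' => by omega⟩
  | succ n ih =>
    intro W instW H hH w
    obtain ⟨W', instW', H', ι, q, hC, hι, hpres, hq, hqinj, hqran⟩ := ih W instW H hH w
    letI := instW'
    refine ⟨Option W', inferInstance, addPendant H' (q n), some ∘ ι,
      fun j => if j = n + 1 then none else some (q j),
      hclosed _ _ hC _, fun x y hxy => hι (by simpa using hxy), ?_, ?_, ?_, ?_⟩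
    · intro x y
      simpa [addPendant_edist_some_some] using hpres x y
    · intro j hj x
      rcases eq_or_ne j (n+1) with rfl | hne
      · beta_reduce
        rw [if_pos rfl]
        simp only [Function.comp_apply]
        rw [addPendant_edist_some_none, hq n le_rfl x]
        push_cast
        ring
      · have hj' : j ≤ n := by omega
        simp only [if_neg hne, Function.comp_apply]
        rw [addPendant_edist_some_some, hq j hj' x]
    · intro j hj j' hj' heq
      rcases eq_or_ne j (n+1) with rfl | hne <;> rcases eq_or_ne j' (n+1) with rfl | hne'
      · rfl
      · simp [if_neg hne'] at heq
      · simp [if_neg hne] at heq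
      · simp only [if_neg hne, if_neg hne'] at heq
        exact hqinj j (by omega) j' (by omega) (by simpa using heq)
    · intro j h1 hj x
      rcases eq_or_ne j (n+1) with rfl | hne
      · simp
      · have : j ≤ n := by omega
        simp only [if_neg hne, Function.comp_apply, ne_eq, Option.some.injEq]
        exact hqran j h1 this x

lemma build_exists
    (C : ∀ (V : Type) [Fintype V], SimpleGraph V → Prop)
    (hclosed : ∀ (V : Type) [Fintype V] (G : SimpleGraph V),
      C V G → ∀ v : V, C (Option V) (addPendant G v))
    (r : ℕ) (V : Type) (instV : Fintype V) (G : SimpleGraph V) (hG : C V G)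
    (S : Finset V) :
    ∃ (W : Type) (instW : Fintype W) (H : SimpleGraph W) (e : V → W) (pv : V → ℕ → W),
      C W H ∧ Function.Injective e ∧ (∀ u v, H.edist (e u) (e v) = G.edist u v) ∧
      (∀ a ∈ S, ∀ j, 1 ≤ j → j ≤ r → ∀ x, H.edist (e x) (pv a j) = G.edist x a + j) ∧
      (∀ a ∈ S, ∀ a' ∈ S, ∀ j j', 1 ≤ j → j ≤ r → 1 ≤ j' → j' ≤ r →
        pv a j = pv a' j' → a = a' ∧ j = j') ∧
      (∀ a ∈ S, ∀ j, 1 ≤ j → j ≤ r → ∀ x, pv a j ≠ e x) := by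
  classical
  induction S using Finset.induction_on with
  | empty =>
    exact ⟨V, instV, G, id, fun a _ => a, hG, fun _ _ h => h, fun _ _ => rfl,
      by simp, by simp, by simp⟩
  | @insert a S ha ih =>
    obtain ⟨W, instW, H, e, pv, hC, he, hpres, hpv, hinj, hran⟩ := ih
    letI := instW
    obtain ⟨W', instW', H', ι, q, hC', hι, hpres', hq, hqinj, hqran⟩ :=
      chain_exists C hclosed r W instW H hC (e a)
    refine ⟨W', instW', H', ι ∘ e, fun b j => if b = a then q j else ι (pv b j),
      hC', hι.comp he, fun u v => by simp [hpres', hpres], ?_, ?_, ?_⟩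
    · intro b hb j h1 hj x
      by_cases hba : b = a
      · subst hba
        beta_reduce
        rw [if_pos rfl]
        simp only [Function.comp_apply]
        rw [hq j hj (e x), hpres]
      · have hbS : b ∈ S := by simpa [hba] using hb
        beta_reduce
        rw [if_neg hba]
        simp only [Function.comp_apply]
        rw [hpres', hpv b hbS j h1 hj x]
    · intro b hb b' hb' j j' h1 hj h1' hj' heq
      beta_reduce at heq
      by_cases hba : b = a <;> by_cases hba' : b' = a
      · subst hba; subst hba'
        rw [if_pos rfl, if_pos rfl] at heq
        exact ⟨rfl, hqinj j hj j' hj' heq⟩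
      · subst hba
        rw [if_pos rfl, if_neg hba'] at heq
        exact absurd heq (hqran j h1 hj _)
      · subst hba'
        rw [if_neg hba, if_pos rfl] at heq
        exact absurd heq.symm (hqran j' h1' hj' _)
      · rw [if_neg hba, if_neg hba'] at heq
        have hbS : b ∈ S := by simpa [hba] using hb
        have hbS' : b' ∈ S := by simpa [hba'] using hb'
        exact hinj b hbS b' hbS' j j' h1 hj h1' hj' (hι heq)
    · intro b hb j h1 hj x
      by_cases hba : b = a
      · subst hba
        beta_reduce
        rw [if_pos rfl]
        exact hqran j h1 hj _
      · have hbS : b ∈ S := by simpa [hba] using hb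
        beta_reduce
        rw [if_neg hba]
        simp only [Function.comp_apply, ne_eq]
        intro hcontra
        exact hran b hbS j h1 hj x (hι hcontra)

lemma profCount_le
    (C : ∀ (V : Type) [Fintype V], SimpleGraph V → Prop)
    (hclosed : ∀ (V : Type) [Fintype V] (G : SimpleGraph V),
      C V G → ∀ v : V, C (Option V) (addPendant G v))
    (f : ℕ → ℕ → ℕ)
    (hnc : ∀ (V : Type) [Fintype V] (G : SimpleGraph V),
      C V G → ∀ r k : ℕ, nc G r k ≤ f r k)
    (V : Type) (instV : Fintype V) (G : SimpleGraph V) (hG : C V G)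
    (r k : ℕ) (A : Set V) (hA : A.ncard = k) :
    profCount G r A ≤ f r ((r + 1) * k) := by
  classical
  have hfin : A.Finite := A.toFinite
  set S : Finset V := hfin.toFinset with hS
  have hmemS : ∀ a, a ∈ S ↔ a ∈ A := fun a => hfin.mem_toFinset
  have hScard : S.card = k := by rw [← hA, Set.ncard_eq_toFinset_card A hfin]
  obtain ⟨W, instW, H, e, pv, hC, he, hpres, hpv, hinj, hran⟩ :=
    build_exists C hclosed r V instV G hG S
  letI := instW
  -- restate over A
  have hpvA : ∀ a ∈ A, ∀ j, 1 ≤ j → j ≤ r → ∀ x, H.edist (e x) (pv a j) = G.edist x a + j :=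
    fun a ha => hpv a ((hmemS a).mpr ha)
  have hinjA : ∀ a ∈ A, ∀ a' ∈ A, ∀ j j', 1 ≤ j → j ≤ r → 1 ≤ j' → j' ≤ r →
      pv a j = pv a' j' → a = a' ∧ j = j' :=
    fun a ha a' ha' => hinj a ((hmemS a).mpr ha) a' ((hmemS a').mpr ha')
  have hranA : ∀ a ∈ A, ∀ j, 1 ≤ j → j ≤ r → ∀ x, pv a j ≠ e x :=
    fun a ha => hran a ((hmemS a).mpr ha)
  -- the set B
  set F : V × ℕ → W := fun x => if x.2 = 0 then e x.1 else pv x.1 x.2 with hF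
  set Bf : Finset W := (S ×ˢ Finset.range (r + 1)).image F with hBf
  have hBmem : ∀ u : W, u ∈ Bf ↔
      (∃ a ∈ A, u = e a) ∨ ∃ a ∈ A, ∃ j, 1 ≤ j ∧ j ≤ r ∧ u = pv a j := by
    intro u
    simp only [hBf, Finset.mem_image, Finset.mem_product, Finset.mem_range]
    constructor
    · rintro ⟨⟨a, j⟩, ⟨haS, hj⟩, rfl⟩
      rcases eq_or_ne j 0 with rfl | hj0
      · exact Or.inl ⟨a, (hmemS a).mp haS, by simp [hF]⟩
      · exact Or.inr ⟨a, (hmemS a).mp haS, j, by omega, by omega, by simp [hF, hj0]⟩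
    · rintro (⟨a, ha, rfl⟩ | ⟨a, ha, j, h1, hj, rfl⟩)
      · exact ⟨(a, 0), ⟨(hmemS a).mpr ha, by omega⟩, by simp [hF]⟩
      · have hj0 : j ≠ 0 := by omega
        exact ⟨(a, j), ⟨(hmemS a).mpr ha, by omega⟩, by simp [hF, hj0]⟩
  have hBcard : Bf.card = (r + 1) * k := by
    rw [hBf, Finset.card_image_of_injOn, Finset.card_product, Finset.card_range, hScard,
      Nat.mul_comm]
    rintro ⟨a, j⟩ hm ⟨a', j'⟩ hm' heq
    simp only [Finset.coe_product, Set.mem_prod, Finset.mem_coe, Finset.coe_range,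
      Set.mem_Iio] at hm hm'
    obtain ⟨haS, hj⟩ := hm
    obtain ⟨haS', hj'⟩ := hm'
    rcases eq_or_ne j 0 with rfl | hj0 <;> rcases eq_or_ne j' 0 with rfl | hj0'
    · simp only [hF, if_pos rfl] at heq
      exact Prod.ext (he heq) rfl
    · simp only [hF, if_pos rfl, if_neg hj0'] at heq
      exact absurd heq.symm (hran a' haS' j' (by omega) (by omega) a)
    · simp only [hF, if_pos rfl, if_neg hj0] at heq
      exact absurd heq (hran a haS j (by omega) (by omega) a')
    · simp only [hF, if_neg hj0, if_neg hj0'] at heq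
      obtain ⟨h1, h2⟩ := hinj a haS a' haS' j j' (by omega) (by omega) (by omega) (by omega) heq
      exact Prod.ext h1 h2
  -- the decoding function
  set g : (↥A → ℕ∞) → Set W := fun p =>
    {u | (∃ a : ↥A, u = e ↑a ∧ p a ≤ (r : ℕ∞)) ∨
      (∃ a : ↥A, ∃ j, 1 ≤ j ∧ j ≤ r ∧ u = pv ↑a j ∧ p a + j ≤ (r : ℕ∞))} with hg
  have hkey : ∀ v : V,
      {u ∈ (↑Bf : Set W) | H.edist (e v) u ≤ (r : ℕ∞)} = g (rProfile G r A v) := by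
    intro v
    ext u
    simp only [Set.mem_sep_iff, Finset.mem_coe, hBmem, hg, Set.mem_setOf_eq]
    constructor
    · rintro ⟨⟨a, ha, rfl⟩ | ⟨a, ha, j, h1, hj, rfl⟩, hdist⟩
      · rw [hpres] at hdist
        refine Or.inl ⟨⟨a, ha⟩, rfl, ?_⟩
        simp [rProfile, hdist]
      · rw [hpvA a ha j h1 hj v] at hdist
        have hle : G.edist v a ≤ (r : ℕ∞) := le_trans (le_self_add) hdist
        refine Or.inr ⟨⟨a, ha⟩, j, h1, hj, rfl, ?_⟩
        simpa [rProfile, hle] using hdist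
    · rintro (⟨⟨a, ha⟩, rfl, hle⟩ | ⟨⟨a, ha⟩, j, h1, hj, rfl, hle⟩)
      · have hda : G.edist v a ≤ (r : ℕ∞) := by
          by_contra hcon
          simp [rProfile, hcon] at hle
        exact ⟨Or.inl ⟨a, ha, rfl⟩, by rwa [hpres]⟩
      · have hda : G.edist v a ≤ (r : ℕ∞) := by
          by_contra hcon
          simp [rProfile, hcon] at hle
        refine ⟨Or.inr ⟨a, ha, j, h1, hj, rfl⟩, ?_⟩
        rw [hpvA a ha j h1 hj v]
        simpa [rProfile, hda] using hle
  -- injectivity of g on realized profiles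
  set P : Set (↥A → ℕ∞) := {p | ∃ v : V, p = rProfile G r A v} with hP
  have hform : ∀ (v : V) (a : ↥A),
      rProfile G r A v a = ⊤ ∨ rProfile G r A v a ≤ (r : ℕ∞) := by
    intro v a
    by_cases h : G.edist v ↑a ≤ (r : ℕ∞)
    · exact Or.inr (by simpa [rProfile, h] using h)
    · exact Or.inl (by simp [rProfile, h])
  have haux : ∀ p ∈ P, ∀ p' ∈ P, g p = g p' → ∀ a : ↥A, p a ≤ p' a := by
    rintro p ⟨v, rfl⟩ p' ⟨v', rfl⟩ hgg a
    rcases hform v' a with htop | hle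
    · simp [htop]
    · have hne : rProfile G r A v' a ≠ ⊤ := by
        intro h; rw [h] at hle; exact absurd hle (by simp)
      obtain ⟨m, hm, hmr⟩ : ∃ m : ℕ, rProfile G r A v' a = (m : ℕ∞) ∧ m ≤ r := by
        lift rProfile G r A v' a to ℕ using hne with m hm
        exact ⟨m, rfl, by exact_mod_cast hle⟩
      rcases Nat.eq_or_lt_of_le hmr with heqm | hltm
      · have hw : (e ↑a) ∈ g (rProfile G r A v') := Or.inl ⟨a, rfl, hle⟩
        rw [← hgg] at hw
        rcases hw with ⟨a', heq, hle'⟩ | ⟨a', j, h1, hj, heq, -⟩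
        · have ha' : a' = a := Subtype.ext (he heq.symm)
          subst ha'
          rw [hm, heqm]
          exact hle'
        · exact absurd heq.symm (hranA ↑a' a'.2 j h1 hj ↑a)
      · have hw : (pv ↑a (r - m)) ∈ g (rProfile G r A v') := by
          refine Or.inr ⟨a, r - m, by omega, by omega, rfl, ?_⟩
          rw [hm]
          have hcast : ((m : ℕ∞) + ((r - m : ℕ) : ℕ∞)) = ((r : ℕ) : ℕ∞) := by
            rw [← Nat.cast_add]
            congr 1
            omega
          exact le_of_eq hcast
        rw [← hgg] at hw
        rcases hw with ⟨a', heq, -⟩ | ⟨a', j, h1, hj, heq, hsum⟩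
        · exact absurd heq (hranA ↑a a.2 (r - m) (by omega) (by omega) ↑a')
        · obtain ⟨haa, hjj⟩ := hinjA ↑a a.2 ↑a' a'.2 (r - m) j (by omega) (by omega) h1 hj heq
          have ha' : a' = a := Subtype.ext haa.symm
          rw [ha', ← hjj] at hsum
          have hne2 : rProfile G r A v a ≠ ⊤ := by
            intro h
            rw [h] at hsum
            simp at hsum
          obtain ⟨m', hm'⟩ : ∃ m' : ℕ, rProfile G r A v a = (m' : ℕ∞) := by
            lift rProfile G r A v a to ℕ using hne2 with m' hm'
            exact ⟨m', rfl⟩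
          rw [hm', hm]
          rw [hm'] at hsum
          have hs : m' + (r - m) ≤ r := by exact_mod_cast hsum
          exact_mod_cast (by omega : m' ≤ m)
  have hginj : Set.InjOn g P := by
    intro p hp p' hp' hgg
    funext a
    exact le_antisymm (haux p hp p' hp' hgg a) (haux p' hp' p hp hgg.symm a)
  -- counting
  set Q : Set (Set W) := {s | ∃ w : W, s = {u ∈ (↑Bf : Set W) | H.edist w u ≤ (r : ℕ∞)}}
    with hQ
  have hPfin : P.Finite := by
    have : P ⊆ Set.range (rProfile G r A) := by
      rintro p ⟨v, rfl⟩; exact ⟨v, rfl⟩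
    exact (Set.finite_range _).subset this
  have hQfin : Q.Finite := by
    have : Q ⊆ Set.range (fun w : W => {u ∈ (↑Bf : Set W) | H.edist w u ≤ (r : ℕ∞)}) := by
      rintro s ⟨w, rfl⟩; exact ⟨w, rfl⟩
    exact (Set.finite_range _).subset this
  have himg : g '' P ⊆ Q := by
    rintro s ⟨p, ⟨v, rfl⟩, rfl⟩
    exact ⟨e v, (hkey v).symm⟩
  have step1 : profCount G r A ≤ ncCount H r (↑Bf : Set W) := by
    unfold profCount ncCount
    calc ({p | ∃ v : V, p = rProfile G r A v} \ {fun _ => ⊤}).ncard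
        ≤ P.ncard := Set.ncard_le_ncard Set.diff_subset hPfin
      _ = (g '' P).ncard := (Set.ncard_image_of_injOn hginj).symm
      _ ≤ Q.ncard := Set.ncard_le_ncard himg hQfin
      _ = _ := rfl
  have step2 : ncCount H r (↑Bf : Set W) ≤ nc H r ((r + 1) * k) := by
    apply le_csSup
    · refine ⟨Nat.card (Set W), ?_⟩
      rintro n ⟨A', _, rfl⟩
      unfold ncCount
      have : {s : Set W | ∃ v : W, s = {u ∈ A' | H.edist v u ≤ (r : ℕ∞)}} =
          (fun v : W => {u ∈ A' | H.edist v u ≤ (r : ℕ∞)}) '' Set.univ := by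
        ext s
        simp [eq_comm]
      rw [this]
      calc _ ≤ (Set.univ : Set W).ncard := Set.ncard_image_le Set.finite_univ
        _ ≤ Nat.card (Set W) := by
            rw [Set.ncard_univ]
            exact Nat.card_le_card_of_injective (fun w => {w}) (fun x y h => by
              simpa using h)
    · exact ⟨(↑Bf : Set W), by rw [Set.ncard_coe_finset, hBcard], rfl⟩
  calc profCount G r A ≤ nc H r ((r + 1) * k) := le_trans step1 step2
    _ ≤ f r ((r + 1) * k) := hnc W H hC r ((r + 1) * k)

/-- Joret–Rambaud, Lemma 8: if a class `C` of finite graphs is closed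
under adding pendant vertices and `nc_r(G,k) ≤ f(r,k)` for all `G ∈ C` and all `r,k`,
then `pc_r(G,k) ≤ f(r,(r+1)k)` for all `G ∈ C` and all `r,k`. -/
theorem pc_le_of_nc_bound_pendant_closed
    (C : ∀ (V : Type) [Fintype V], SimpleGraph V → Prop)
    (hclosed : ∀ (V : Type) [Fintype V] (G : SimpleGraph V),
      C V G → ∀ v : V, C (Option V) (addPendant G v))
    (f : ℕ → ℕ → ℕ)
    (hnc : ∀ (V : Type) [Fintype V] (G : SimpleGraph V),
      C V G → ∀ r k : ℕ, nc G r k ≤ f r k) :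
    ∀ (V : Type) [Fintype V] (G : SimpleGraph V),
      C V G → ∀ r k : ℕ, pc G r k ≤ f r ((r + 1) * k) := by
  intro V instV G hG r k
  apply csSup_le'
  rintro n ⟨A, hA, rfl⟩
  exact profCount_le C hclosed f hnc V instV G hG r k A hA
end
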